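/- arXiv:1502.05001 — 2 statements merged into one kernel-verified Lean document; each statement's English description precedes it below -/
import Mathlib

section
/- Let X be a flow space for G and γ > 0. For every y ∈ Y_axes, the orbit G·y ⊆ Y_axes is closed and discrete. -/
open Pointwise Set

/-!
Since `c` is an axis point, `t₀ +ᵥ c = g₀ • c` for some `t₀ > 0`, so the flow line through `c`
is the union of the `g₀ ^ n`-translates of the compact arc `[0, t₀] +ᵥ c`. A union of
`G`-translates of the flow line that is stable under right multiplication by `g₀` is therefore a
union of translates of one compact set, and properness makes such a union closed: a convergent
sequence together with its limit is compact, so it meets only finitely many of the translates.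
Translates of the flow line are ℝ-orbits, hence equal or disjoint, and the complement of the union
of those different from `g • FL` is the required flow-invariant neighbourhood of `g • FL`.
-/

theorem isClosed_biUnion_smul_of_isCompact {G X : Type*} [Monoid G] [TopologicalSpace X]
    [SequentialSpace X] [T2Space X] [MulAction G X]
    (hcont : ∀ g : G, Continuous fun x : X => g • x)
    (hproper : ∀ K : Set X, IsCompact K → {g : G | (K ∩ g • K).Nonempty}.Finite)
    {S : Set X} (hS : IsCompact S) (T : Set G) :
    IsClosed (⋃ g ∈ T, g • S) := by
  refine IsSeqClosed.isClosed fun u x hu hux => ?_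
  set K := insert x (range u) ∪ S
  have hK : IsCompact K := hux.isCompact_insert_range.union hS
  set F := T ∩ {g : G | (K ∩ g • K).Nonempty}
  have hF : F.Finite := (hproper K hK).subset inter_subset_right
  have huF : ∀ n, u n ∈ ⋃ g ∈ F, g • S := by
    intro n
    obtain ⟨g, hgT, s, hs, hsu⟩ := mem_iUnion₂.mp (hu n)
    have huK : u n ∈ K := .inl (mem_insert_of_mem _ ⟨n, rfl⟩)
    exact mem_iUnion₂.mpr ⟨g, ⟨hgT, u n, huK, s, .inr hs, hsu⟩, s, hs, hsu⟩
  have hclosed : IsClosed (⋃ g ∈ F, g • S) :=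
    hF.isClosed_biUnion fun g _ => (hS.image (hcont g)).isClosed
  exact biUnion_subset_biUnion_left inter_subset_left
    (hclosed.mem_of_tendsto hux (.of_forall huF))

section Flow

variable {G X : Type*} [Group G] [MulAction G X] [AddAction ℝ X]

theorem smul_addOrbit (hcomm : ∀ (g : G) (t : ℝ) (x : X), t +ᵥ g • x = g • (t +ᵥ x))
    (g : G) (x : X) : g • AddAction.orbit ℝ x = AddAction.orbit ℝ (g • x) := by
  simp only [AddAction.orbit, smul_set_range, hcomm]

theorem intCast_mul_vadd_eq_zpow_smul (hcomm : ∀ (g : G) (t : ℝ) (x : X), t +ᵥ g • x = g • (t +ᵥ x))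
    {c : X} {g₀ : G} {t₀ : ℝ} (hper : t₀ +ᵥ c = g₀ • c) (n : ℤ) :
    n * t₀ +ᵥ c = g₀ ^ n • c := by
  have hinv : (-t₀) +ᵥ c = g₀⁻¹ • c := by
    rw [neg_vadd_eq_iff, hcomm, hper, inv_smul_smul]
  induction n using Int.induction_on with
  | zero => simp
  | succ n ih =>
    rw [Int.cast_add, Int.cast_one, add_one_mul, add_comm, add_vadd, ih, hcomm, hper,
      smul_smul, ← zpow_add_one]
  | pred n ih =>
    rw [Int.cast_sub, Int.cast_one, sub_one_mul, sub_eq_neg_add, add_vadd, ih, hcomm, hinv,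
      smul_smul, ← zpow_sub_one]

theorem exists_vadd_eq_zpow_smul_vadd_Ico
    (hcomm : ∀ (g : G) (t : ℝ) (x : X), t +ᵥ g • x = g • (t +ᵥ x))
    {c : X} {g₀ : G} {t₀ : ℝ} (ht₀ : 0 < t₀) (hper : t₀ +ᵥ c = g₀ • c) (t : ℝ) :
    ∃ n : ℤ, ∃ r ∈ Ico 0 t₀, t +ᵥ c = g₀ ^ n • (r +ᵥ c) := by
  refine ⟨⌊t / t₀⌋, t - ⌊t / t₀⌋ * t₀,
    ⟨Int.sub_floor_div_mul_nonneg t ht₀, Int.sub_floor_div_mul_lt t ht₀⟩, ?_⟩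
  rw [← hcomm, ← intCast_mul_vadd_eq_zpow_smul hcomm hper, ← add_vadd, sub_add_cancel]

theorem biUnion_addOrbit_smul_eq_biUnion_smul_image_Icc
    (hcomm : ∀ (g : G) (t : ℝ) (x : X), t +ᵥ g • x = g • (t +ᵥ x))
    {c : X} {g₀ : G} {t₀ : ℝ} (ht₀ : 0 < t₀) (hper : t₀ +ᵥ c = g₀ • c)
    {T : Set G} (hT : ∀ h ∈ T, ∀ n : ℤ, h * g₀ ^ n ∈ T) :
    ⋃ h ∈ T, AddAction.orbit ℝ (h • c) = ⋃ h ∈ T, h • ((· +ᵥ c) '' Icc 0 t₀) := by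
  refine subset_antisymm ?_ (iUnion₂_mono fun h _ => ?_)
  · simp only [iUnion_subset_iff]
    rintro h hh _ ⟨t, rfl⟩
    obtain ⟨n, r, hr, hrc⟩ := exists_vadd_eq_zpow_smul_vadd_Ico hcomm ht₀ hper t
    refine mem_iUnion₂.mpr ⟨h * g₀ ^ n, hT h hh n, r +ᵥ c, ⟨r, Ico_subset_Icc_self hr, rfl⟩, ?_⟩
    simp only [hcomm, hrc, mul_smul]
  · rintro _ ⟨_, ⟨r, -, rfl⟩, rfl⟩
    exact ⟨r, hcomm h r c⟩

theorem isClosed_biUnion_addOrbit_smul [TopologicalSpace X] [SequentialSpace X] [T2Space X]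
    (hcont : ∀ g : G, Continuous fun x : X => g • x)
    (hproper : ∀ K : Set X, IsCompact K → {g : G | (K ∩ g • K).Nonempty}.Finite)
    (hcomm : ∀ (g : G) (t : ℝ) (x : X), t +ᵥ g • x = g • (t +ᵥ x))
    {c : X} (hc : Continuous fun t : ℝ => t +ᵥ c) {g₀ : G} {t₀ : ℝ} (ht₀ : 0 < t₀)
    (hper : t₀ +ᵥ c = g₀ • c) {T : Set G} (hT : ∀ h ∈ T, ∀ n : ℤ, h * g₀ ^ n ∈ T) :
    IsClosed (⋃ h ∈ T, AddAction.orbit ℝ (h • c)) := by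
  rw [biUnion_addOrbit_smul_eq_biUnion_smul_image_Icc hcomm ht₀ hper hT]
  exact isClosed_biUnion_smul_of_isCompact hcont hproper (isCompact_Icc.image hc) T

theorem addOrbit_mul_zpow_smul (hcomm : ∀ (g : G) (t : ℝ) (x : X), t +ᵥ g • x = g • (t +ᵥ x))
    {c : X} {g₀ : G} {t₀ : ℝ} (hper : t₀ +ᵥ c = g₀ • c) (h : G) (n : ℤ) :
    AddAction.orbit ℝ ((h * g₀ ^ n) • c) = AddAction.orbit ℝ (h • c) := by
  rw [mul_smul, ← intCast_mul_vadd_eq_zpow_smul hcomm hper, ← hcomm, AddAction.orbit_vadd]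

end Flow

section Orbits

variable {M α ι : Type*} [AddGroup M] [AddAction M α]

theorem vadd_mem_biUnion_addOrbit_iff {f : ι → α} {T : Set ι} (t : M) (x : α) :
    t +ᵥ x ∈ ⋃ i ∈ T, AddAction.orbit M (f i) ↔ x ∈ ⋃ i ∈ T, AddAction.orbit M (f i) := by
  simp only [mem_iUnion₂, ← AddAction.orbit_eq_iff, AddAction.orbit_vadd]

theorem addOrbit_subset_compl_biUnion_addOrbit_ne (f : ι → α) (i : ι) :
    AddAction.orbit M (f i) ⊆
      (⋃ j ∈ {j | AddAction.orbit M (f j) ≠ AddAction.orbit M (f i)},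
        AddAction.orbit M (f j))ᶜ := by
  intro x hxi hx
  obtain ⟨j, hj, hxj⟩ := mem_iUnion₂.mp hx
  exact hj <| (AddAction.orbit_eq_iff.mpr hxj).symm.trans (AddAction.orbit_eq_iff.mpr hxi)

theorem compl_biUnion_addOrbit_ne_inter_iUnion (f : ι → α) (i : ι) :
    (⋃ j ∈ {j | AddAction.orbit M (f j) ≠ AddAction.orbit M (f i)}, AddAction.orbit M (f j))ᶜ ∩
      ⋃ j, AddAction.orbit M (f j) = AddAction.orbit M (f i) := by
  refine subset_antisymm ?_ fun x hx =>
    ⟨addOrbit_subset_compl_biUnion_addOrbit_ne f i hx, mem_iUnion_of_mem i hx⟩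
  rintro x ⟨hxC, hx⟩
  obtain ⟨j, hxj⟩ := mem_iUnion.mp hx
  by_contra hxi
  exact hxC (mem_iUnion₂.mpr ⟨j, fun hji => hxi (hji ▸ hxj), hxj⟩)

end Orbits

def axes (G : Type*) {X : Type*} [SMul G X] [VAdd ℝ X] (γ : ℝ) : Set X :=
  {x | (¬ ∃ t : ℝ, 0 < t ∧ t +ᵥ x = x) ∧ ∃ g : G, ∃ t : ℝ, 0 < t ∧ t ≤ γ ∧ t +ᵥ x = g • x}

section Axes

variable {G X : Type*} [Group G] [MulAction G X] [AddAction ℝ X]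

theorem addOrbit_subset_axes
    (hcomm : ∀ (g : G) (t : ℝ) (x : X), t +ᵥ g • x = g • (t +ᵥ x))
    {γ : ℝ} {x : X} (hx : x ∈ axes G γ) : AddAction.orbit ℝ x ⊆ axes G γ := by
  rintro _ ⟨s, rfl⟩
  obtain ⟨hnp, g, t, ht, htγ, hper⟩ := hx
  refine ⟨fun ⟨p, hp, hps⟩ => hnp ⟨p, hp, ?_⟩, g, t, ht, htγ, ?_⟩
  · rwa [vadd_vadd, add_comm, ← vadd_vadd, vadd_left_cancel_iff] at hps
  · rw [vadd_vadd, add_comm, ← vadd_vadd, hper, hcomm]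

theorem smul_mem_axes
    (hcomm : ∀ (g : G) (t : ℝ) (x : X), t +ᵥ g • x = g • (t +ᵥ x))
    {γ : ℝ} {x : X} (hx : x ∈ axes G γ) (g : G) : g • x ∈ axes G γ := by
  obtain ⟨hnp, g₁, t, ht, htγ, hper⟩ := hx
  refine ⟨fun ⟨p, hp, hps⟩ => hnp ⟨p, hp, ?_⟩, g * g₁ * g⁻¹, t, ht, htγ, ?_⟩
  · rwa [hcomm, smul_left_cancel_iff] at hps
  · rw [hcomm, hper, smul_smul, smul_smul, inv_mul_cancel_right]

end Axes

theorem stmt12_general {G X : Type*} [Group G] [MetricSpace X] [MulAction G X] [AddAction ℝ X]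
    (hiso : ∀ g : G, Isometry (fun x : X => g • x))
    (hproper : ∀ K : Set X, IsCompact K → {g : G | (K ∩ g • K).Nonempty}.Finite)
    (hflowcont : Continuous fun p : ℝ × X => p.1 +ᵥ p.2)
    (hcomm : ∀ (g : G) (t : ℝ) (x : X), t +ᵥ (g • x) = g • (t +ᵥ x))
    (γ : ℝ)
    (Xaxes : Set X)
    (hXaxes : Xaxes = {x : X | (¬ ∃ t : ℝ, 0 < t ∧ t +ᵥ x = x) ∧
      ∃ g : G, ∃ t : ℝ, 0 < t ∧ t ≤ γ ∧ t +ᵥ x = g • x})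
    (c : X) (hc : c ∈ Xaxes)
    (FL : Set X) (hFL : FL = Set.range fun t : ℝ => t +ᵥ c) :
    -- the G-orbit of y = [c] is closed in Y_axes: its preimage under the quotient map
    -- is closed in the subspace X_axes
    IsClosed ((Subtype.val : Xaxes → X) ⁻¹' (⋃ g : G, g • FL)) ∧
      -- and discrete: each point g·y is isolated, i.e. there is a flow-invariant
      -- relatively open subset of X_axes meeting the orbit preimage exactly in g·FL
      ∀ g : G, ∃ W : Set X,
        (∃ O : Set X, IsOpen O ∧ W = O ∩ Xaxes) ∧
        (∀ (t : ℝ), ∀ x ∈ W, t +ᵥ x ∈ W) ∧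
        g • FL ⊆ W ∧
        W ∩ (⋃ h : G, h • FL) = g • FL := by
  change Xaxes = axes G γ at hXaxes
  subst hXaxes
  obtain ⟨g₀, t₀, ht₀, -, hper⟩ := hc.2
  have hclosed : ∀ T : Set G, (∀ h ∈ T, ∀ n : ℤ, h * g₀ ^ n ∈ T) →
      IsClosed (⋃ h ∈ T, AddAction.orbit ℝ (h • c)) := fun T hT =>
    isClosed_biUnion_addOrbit_smul (fun g => (hiso g).continuous) hproper hcomm
      (hflowcont.comp (continuous_id.prodMk continuous_const)) ht₀ hper hT
  have hsub : ∀ h : G, AddAction.orbit ℝ (h • c) ⊆ axes G γ := fun h =>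
    addOrbit_subset_axes hcomm (smul_mem_axes hcomm hc h)
  have hFL' : ∀ h : G, h • FL = AddAction.orbit ℝ (h • c) := fun h =>
    hFL ▸ smul_addOrbit hcomm h c
  simp only [hFL']
  refine ⟨by simpa using (hclosed univ (by simp)).preimage continuous_subtype_val, fun g => ?_⟩
  set T := {h : G | AddAction.orbit ℝ (h • c) ≠ AddAction.orbit ℝ (g • c)}
  have hT : ∀ h ∈ T, ∀ n : ℤ, h * g₀ ^ n ∈ T := fun h hh n =>
    (addOrbit_mul_zpow_smul hcomm hper h n).trans_ne hh
  refine ⟨(⋃ h ∈ T, AddAction.orbit ℝ (h • c))ᶜ ∩ axes G γ, ⟨_, (hclosed T hT).isOpen_compl, rfl⟩,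
    fun t x hx => ⟨?_, ?_⟩, ?_, ?_⟩
  · exact (vadd_mem_biUnion_addOrbit_iff t x).not.mpr hx.1
  · exact addOrbit_subset_axes hcomm hx.2 (AddAction.mem_orbit x t)
  · exact subset_inter (addOrbit_subset_compl_biUnion_addOrbit_ne (· • c) g) (hsub g)
  · rw [inter_right_comm, compl_biUnion_addOrbit_ne_inter_iUnion (· • c) g]
    exact inter_eq_left.mpr (hsub g)

theorem stmt12 {G X : Type*} [Group G] [MetricSpace X] [MulAction G X] [AddAction ℝ X]
    (hiso : ∀ g : G, Isometry (fun x : X => g • x))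
    (hproper : ∀ K : Set X, IsCompact K → {g : G | (K ∩ g • K).Nonempty}.Finite)
    (hflowcont : Continuous fun p : ℝ × X => p.1 +ᵥ p.2)
    (hcomm : ∀ (g : G) (t : ℝ) (x : X), t +ᵥ (g • x) = g • (t +ᵥ x))
    (γ : ℝ) (hγ : 0 < γ)
    (Xaxes : Set X)
    (hXaxes : Xaxes = {x : X | (¬ ∃ t : ℝ, 0 < t ∧ t +ᵥ x = x) ∧
      ∃ g : G, ∃ t : ℝ, 0 < t ∧ t ≤ γ ∧ t +ᵥ x = g • x})
    (c : X) (hc : c ∈ Xaxes)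
    (FL : Set X) (hFL : FL = Set.range fun t : ℝ => t +ᵥ c) :
    -- the G-orbit of y = [c] is closed in Y_axes: its preimage under the quotient map
    -- is closed in the subspace X_axes
    IsClosed ((Subtype.val : Xaxes → X) ⁻¹' (⋃ g : G, g • FL)) ∧
      -- and discrete: each point g·y is isolated, i.e. there is a flow-invariant
      -- relatively open subset of X_axes meeting the orbit preimage exactly in g·FL
      ∀ g : G, ∃ W : Set X,
        (∃ O : Set X, IsOpen O ∧ W = O ∩ Xaxes) ∧
        (∀ (t : ℝ), ∀ x ∈ W, t +ᵥ x ∈ W) ∧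
        g • FL ⊆ W ∧
        W ∩ (⋃ h : G, h • FL) = g • FL :=
  stmt12_general hiso hproper hflowcont hcomm γ Xaxes hXaxes c hc FL hFL
end

section
/- Let X be a locally compact flow space for G and γ > 0. For every y in Y_cyc := ℝ\X_cyc (the quotient of the compact-flow-line part with G-period ≤ γ by the flow), there is a compact neighborhood L of q⁻¹(y) in X_cyc such that the set {g ∈ G | g·q(L) ∩ q(L) ≠ ∅} is finite; i.e., the induced G-action on Y_cyc is proper. -/
/-!
If `x ∈ X_cyc` has flow period `p` and `t +ᵥ x = g • x`, then every `g ^ n • x = (n * t) +ᵥ x`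
lies on the compact flow line `[0, p] +ᵥ {x}`, so properness forces `g` to have finite order and
`orderOf g * t` is a flow period of `x`. Over a compact set `K`, rescaling `t` into `[γ/2, γ]`
confines the witnesses `g` to a finite set; this bounds the flow periods on `K ∩ X_cyc`
uniformly and writes `K ∩ X_cyc` as `K` intersected with a closed set. Taking for `K` a compact
neighbourhood of the flow line of `c`, every flow line through `L = K ∩ X_cyc` lies in the
compact set `[0, P] +ᵥ L`, and properness of the `G`-action on it gives the finiteness.
-/

open Pointwise Set

/-- The set `X_cyc` of the paper. -/
def cyclicSet (G : Type*) {X : Type*} [Group G] [MulAction G X] [AddAction ℝ X] (γ : ℝ) :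
    Set X :=
  {x | ∃ t : ℝ, 0 < t ∧ t +ᵥ x = x} ∩ {x | ∃ g : G, ∃ t : ℝ, 0 < t ∧ t ≤ γ ∧ t +ᵥ x = g • x}

theorem exists_nat_mul_mem_Icc_half {p B : ℝ} (hp : 0 < p) (hpB : p ≤ B) :
    ∃ k : ℕ, k * p ∈ Icc (B / 2) B := by
  refine ⟨⌊B / p⌋₊, ?_, ?_⟩
  · have h1 : 1 ≤ ⌊B / p⌋₊ := Nat.one_le_floor_iff _ |>.2 ((one_le_div hp).2 hpB)
    have h2 : B / p < ⌊B / p⌋₊ + 1 := Nat.lt_floor_add_one _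
    rw [div_lt_iff₀ hp] at h2
    have : (1 : ℝ) ≤ ⌊B / p⌋₊ := by exact_mod_cast h1
    nlinarith
  · have := Nat.floor_le (div_nonneg (hp.le.trans hpB) hp.le)
    rwa [le_div_iff₀ hp] at this

theorem isClosed_setOf_exists_vadd_eq {X : Type*} [TopologicalSpace X] [T2Space X]
    [AddAction ℝ X] [ContinuousVAdd ℝ X] {I : Set ℝ} (hI : IsCompact I) {f : X → X}
    (hf : Continuous f) : IsClosed {x : X | ∃ t ∈ I, t +ᵥ x = f x} := by
  have : CompactSpace I := isCompact_iff_compactSpace.1 hI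
  have hclosed : IsClosed {q : I × X | (q.1 : ℝ) +ᵥ q.2 = f q.2} :=
    isClosed_eq (by fun_prop) (hf.comp continuous_snd)
  convert isClosedMap_snd_of_compactSpace _ hclosed using 1
  ext x
  simp

section Flow

variable {G X : Type*} [Group G] [MulAction G X] [AddAction ℝ X]

theorem natCast_mul_vadd_eq_pow_smul
    (hcomm : ∀ (g : G) (t : ℝ) (x : X), t +ᵥ (g • x) = g • (t +ᵥ x))
    {g : G} {t : ℝ} {x : X} (h : t +ᵥ x = g • x) (n : ℕ) : (n * t) +ᵥ x = g ^ n • x := by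
  induction n with
  | zero => simp
  | succ n ih => rw [Nat.cast_succ, add_one_mul, add_comm, add_vadd, ih, hcomm, h, ← mul_smul,
      ← pow_succ]

theorem vadd_mem_Icc_vadd_of_vadd_eq_self {p P : ℝ} (hp : 0 < p) (hpP : p ≤ P) {x : X}
    (hpx : p +ᵥ x = x) {K : Set X} (hx : x ∈ K) (u : ℝ) : u +ᵥ x ∈ Icc 0 P +ᵥ K := by
  have hper : toIcoDiv hp 0 u • p +ᵥ x = x :=
    zsmul_mem (AddAction.mem_stabilizer_iff.2 hpx) _
  refine ⟨toIcoMod hp 0 u, ?_, x, hx, ?_⟩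
  · exact Ico_subset_Icc_self.trans (Icc_subset_Icc_right hpP) (toIcoMod_mem_Ico' hp u)
  · show _ +ᵥ x = _
    conv_rhs => rw [← toIcoMod_add_toIcoDiv_zsmul hp 0 u, add_vadd, hper]

theorem orderOf_mul_vadd_eq_self
    (hcomm : ∀ (g : G) (t : ℝ) (x : X), t +ᵥ (g • x) = g • (t +ᵥ x))
    {g : G} {t : ℝ} {x : X} (h : t +ᵥ x = g • x) : (orderOf g * t) +ᵥ x = x := by
  rw [natCast_mul_vadd_eq_pow_smul hcomm h, pow_orderOf_eq_one, one_smul]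

theorem inter_smul_nonempty_of_vadd_eq_smul {I : Set ℝ} (h0 : 0 ∈ I) {K : Set X} {x : X}
    (hx : x ∈ K) {t : ℝ} (ht : t ∈ I) {g : G} (h : t +ᵥ x = g • x) :
    ((I +ᵥ K) ∩ g • (I +ᵥ K)).Nonempty :=
  ⟨g • x, h ▸ vadd_mem_vadd ht hx, smul_mem_smul_set (zero_vadd ℝ x ▸ vadd_mem_vadd h0 hx)⟩

variable [TopologicalSpace X] [ContinuousVAdd ℝ X]

theorem isOfFinOrder_of_vadd_eq_smul
    (hproper : ∀ K : Set X, IsCompact K → {g : G | (K ∩ g • K).Nonempty}.Finite)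
    (hcomm : ∀ (g : G) (t : ℝ) (x : X), t +ᵥ (g • x) = g • (t +ᵥ x))
    {x : X} {p : ℝ} (hp : 0 < p) (hpx : p +ᵥ x = x) {g : G} {t : ℝ} (h : t +ᵥ x = g • x) :
    IsOfFinOrder g := by
  have hline (u : ℝ) : u +ᵥ x ∈ Icc 0 p +ᵥ ({x} : Set X) :=
    vadd_mem_Icc_vadd_of_vadd_eq_self hp le_rfl hpx (mem_singleton x) u
  rw [← finite_powers]
  refine (hproper (Icc 0 p +ᵥ {x}) (isCompact_Icc.vadd_set isCompact_singleton)).subset ?_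
  rintro _ ⟨n, rfl⟩
  have hx : x ∈ Icc 0 p +ᵥ ({x} : Set X) := by simpa using hline 0
  refine ⟨g ^ n • x, ?_, smul_mem_smul_set hx⟩
  rw [← natCast_mul_vadd_eq_pow_smul hcomm h]
  exact hline _

theorem exists_period_bound
    (hproper : ∀ K : Set X, IsCompact K → {g : G | (K ∩ g • K).Nonempty}.Finite)
    (hcomm : ∀ (g : G) (t : ℝ) (x : X), t +ᵥ (g • x) = g • (t +ᵥ x))
    {γ : ℝ} {K : Set X} (hK : IsCompact K) :
    ∃ P : ℝ, ∀ x ∈ K ∩ cyclicSet G γ, ∃ p : ℝ, 0 < p ∧ p ≤ P ∧ p +ᵥ x = x := by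
  set C := Icc 0 γ +ᵥ K
  obtain ⟨P, hP⟩ :=
    ((hproper C (isCompact_Icc.vadd_set hK)).image fun g : G => orderOf g * γ).bddAbove
  refine ⟨P, ?_⟩
  rintro x ⟨hxK, ⟨q, hq, hqx⟩, g, t, ht, htγ, hgx⟩
  have hgC : (C ∩ g • C).Nonempty :=
    inter_smul_nonempty_of_vadd_eq_smul (I := Icc 0 γ) ⟨le_rfl, ht.le.trans htγ⟩ hxK
      ⟨ht.le, htγ⟩ hgx
  have hg := isOfFinOrder_of_vadd_eq_smul hproper hcomm hq hqx hgx
  refine ⟨orderOf g * t, mul_pos (by exact_mod_cast hg.orderOf_pos) ht, ?_,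
    orderOf_mul_vadd_eq_self hcomm hgx⟩
  calc (orderOf g : ℝ) * t ≤ orderOf g * γ := by gcongr
    _ ≤ P := hP (mem_image_of_mem _ hgC)

theorem IsCompact.inter_cyclicSet [T2Space X] [ContinuousConstSMul G X]
    (hproper : ∀ K : Set X, IsCompact K → {g : G | (K ∩ g • K).Nonempty}.Finite)
    (hcomm : ∀ (g : G) (t : ℝ) (x : X), t +ᵥ (g • x) = g • (t +ᵥ x))
    {γ : ℝ} (hγ : 0 < γ) {K : Set X} (hK : IsCompact K) : IsCompact (K ∩ cyclicSet G γ) := by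
  set C := Icc 0 γ +ᵥ K
  set T := {g : G | (C ∩ g • C).Nonempty ∧ IsOfFinOrder g}
  have hT : T.Finite := (hproper C (isCompact_Icc.vadd_set hK)).subset fun g hg => hg.1
  set Z := ⋃ g ∈ T, {x : X | ∃ t ∈ Icc (γ / 2) γ, t +ᵥ x = g • x}
  have hZ : IsClosed Z := hT.isClosed_biUnion fun g _ =>
    isClosed_setOf_exists_vadd_eq isCompact_Icc (continuous_const_smul g)
  suffices K ∩ cyclicSet G γ = K ∩ Z from this ▸ hK.inter_right hZ
  ext x
  refine ⟨?_, ?_⟩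
  · rintro ⟨hxK, ⟨q, hq, hqx⟩, g, t, ht, htγ, hgx⟩
    obtain ⟨k, hk⟩ := exists_nat_mul_mem_Icc_half ht htγ
    have hgk := natCast_mul_vadd_eq_pow_smul hcomm hgx k
    have hgkC : (C ∩ g ^ k • C).Nonempty :=
      inter_smul_nonempty_of_vadd_eq_smul (I := Icc 0 γ) ⟨le_rfl, hγ.le⟩ hxK
        (Icc_subset_Icc_left (by linarith) hk) hgk
    exact ⟨hxK, mem_biUnion (x := g ^ k)
      ⟨hgkC, (isOfFinOrder_of_vadd_eq_smul hproper hcomm hq hqx hgx).pow⟩ ⟨_, hk, hgk⟩⟩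
  · rintro ⟨hxK, hxZ⟩
    obtain ⟨g, ⟨-, hg⟩, t, ⟨htγ2, htγ⟩, hgx⟩ := mem_iUnion₂.1 hxZ
    have ht : 0 < t := by linarith
    exact ⟨hxK, ⟨orderOf g * t, mul_pos (by exact_mod_cast hg.orderOf_pos) ht,
      orderOf_mul_vadd_eq_self hcomm hgx⟩, g, t, ht, htγ, hgx⟩

theorem finite_setOf_exists_vadd_smul_mem
    (hproper : ∀ K : Set X, IsCompact K → {g : G | (K ∩ g • K).Nonempty}.Finite)
    (hcomm : ∀ (g : G) (t : ℝ) (x : X), t +ᵥ (g • x) = g • (t +ᵥ x))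
    {L : Set X} (hL : IsCompact L) {P : ℝ} (hP : ∀ x ∈ L, ∃ p, 0 < p ∧ p ≤ P ∧ p +ᵥ x = x) :
    {g : G | ∃ x ∈ L, ∃ t : ℝ, t +ᵥ (g • x) ∈ L}.Finite := by
  have hflow : ∀ x ∈ L, ∀ u : ℝ, u +ᵥ x ∈ Icc 0 P +ᵥ L := fun x hx u => by
    obtain ⟨p, hp, hpP, hpx⟩ := hP x hx
    exact vadd_mem_Icc_vadd_of_vadd_eq_self hp hpP hpx hx u
  refine (hproper (Icc 0 P +ᵥ L) (isCompact_Icc.vadd_set hL)).subset ?_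
  rintro g ⟨x, hx, t, htx⟩
  refine ⟨t +ᵥ g • x, zero_vadd ℝ (t +ᵥ g • x) ▸ hflow _ htx 0, ?_⟩
  rw [hcomm]
  exact smul_mem_smul_set (hflow x hx t)

end Flow

theorem stmt17 {G X : Type*} [Group G] [MetricSpace X] [MulAction G X] [AddAction ℝ X]
    [LocallyCompactSpace X]
    (hiso : ∀ g : G, Isometry (fun x : X => g • x))
    (hproper : ∀ K : Set X, IsCompact K → {g : G | (K ∩ g • K).Nonempty}.Finite)
    (hflowcont : Continuous fun p : ℝ × X => p.1 +ᵥ p.2)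
    (hcomm : ∀ (g : G) (t : ℝ) (x : X), t +ᵥ (g • x) = g • (t +ᵥ x))
    (γ : ℝ) (hγ : 0 < γ)
    (Xcyc : Set X)
    (hXcyc : Xcyc = {x : X | ∃ t : ℝ, 0 < t ∧ t +ᵥ x = x} ∩
      {x : X | ∃ g : G, ∃ t : ℝ, 0 < t ∧ t ≤ γ ∧ t +ᵥ x = g • x}) :
    ∀ c ∈ Xcyc, ∃ L : Set X, IsCompact L ∧ L ⊆ Xcyc ∧
      -- L is a neighborhood within X_cyc of the flow line q⁻¹(y) through c
      (∃ O : Set X, IsOpen O ∧ (Set.range fun t : ℝ => t +ᵥ c) ⊆ O ∧ O ∩ Xcyc ⊆ L) ∧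
      -- the set {g | g·q(L) ∩ q(L) ≠ ∅} is finite
      {g : G | ∃ x ∈ L, ∃ t : ℝ, t +ᵥ (g • x) ∈ L}.Finite := by
  have : ContinuousVAdd ℝ X := ⟨hflowcont⟩
  have : ContinuousConstSMul G X := ⟨fun g => (hiso g).continuous⟩
  intro c hc
  subst hXcyc
  obtain ⟨⟨p, hp, hpc⟩, -⟩ := hc
  have hline : (range fun t : ℝ => t +ᵥ c) ⊆ Icc 0 p +ᵥ {c} :=
    range_subset_iff.2 (vadd_mem_Icc_vadd_of_vadd_eq_self hp le_rfl hpc (mem_singleton c))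
  obtain ⟨K, hK, hlineK⟩ := exists_compact_superset
    ((isCompact_Icc (a := 0) (b := p)).vadd_set (isCompact_singleton (x := c)))
  obtain ⟨P, hP⟩ := exists_period_bound hproper hcomm (γ := γ) hK
  have hL : IsCompact (K ∩ cyclicSet G γ) := hK.inter_cyclicSet hproper hcomm hγ
  exact ⟨K ∩ cyclicSet G γ, hL, inter_subset_right,
    ⟨interior K, isOpen_interior, hline.trans hlineK, inter_subset_inter_left _ interior_subset⟩,
    finite_setOf_exists_vadd_smul_mem hproper hcomm hL hP⟩
end
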